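/- arXiv:2509.20932 — 7 statements merged into one kernel-verified Lean document; each statement's English description precedes it below -/
import Mathlib

section
/- Functoriality of approximation: if α is a morphism of selection functions from s to t over a short lens map, then α is also a morphism from T_ε(s) to T_ε(t). -/
def Tsel {X V : Type*} [MetricSpace V] (ε : ℝ) (G : (X → V) → Set X) :
    (X → V) → Set X :=
  fun k => {x | ∃ k' : X → V, (∀ y, dist (k' y) (k y) ≤ ε) ∧ x ∈ G k'}

theorem Tsel_functorial {X V X' V' : Type*} [MetricSpace V] [MetricSpace V']
    (s : (X → V) → Set X) (t : (X' → V') → Set X')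
    (α₀ : X → X') (α₁ : X × V' → V)
    (hshort : ∀ x : X, ∀ v w : V', dist (α₁ (x, v)) (α₁ (x, w)) ≤ dist v w)
    (hmor : ∀ (k : X' → V') (x : X), α₀ x ∈ t k → x ∈ s (fun z => α₁ (z, k (α₀ z))))
    (ε : ℝ) :
    ∀ (k : X' → V') (x : X),
      α₀ x ∈ Tsel ε t k → x ∈ Tsel ε s (fun z => α₁ (z, k (α₀ z))) := by
  rintro k x ⟨k', hk'_close, hx⟩
  refine ⟨fun z => α₁ (z, k' (α₀ z)), fun z => ?_, hmor k' x hx⟩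
  exact (hshort z _ _).trans (hk'_close (α₀ z))
end

section
/- Approximation is lax monoidal with respect to the Nash product: T_ε(G ⊗ H) ⊆ T_ε(G) ⊗ T_ε(H) for selection functions G and H. -/
def Nash {X X' V V' : Type*} (G : (X → V) → Set X) (H : (X' → V') → Set X') :
    (X × X' → V × V') → Set (X × X') :=
  fun f => {p | p.1 ∈ G (fun z => (f (z, p.2)).1) ∧ p.2 ∈ H (fun z' => (f (p.1, z')).2)}

theorem mem_Tsel_comp {X Y V W : Type*} [MetricSpace V] [PseudoMetricSpace W] {ε : ℝ}
    (G : (X → V) → Set X) {φ : W → V} (hφ : LipschitzWith 1 φ) (ι : X → Y) {k k' : Y → W}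
    (hk : ∀ y, dist (k' y) (k y) ≤ ε) {x : X} (hx : x ∈ G (φ ∘ k' ∘ ι)) :
    x ∈ Tsel ε G (φ ∘ k ∘ ι) := by
  refine ⟨φ ∘ k' ∘ ι, fun z => ?_, hx⟩
  calc dist (φ (k' (ι z))) (φ (k (ι z))) ≤ dist (k' (ι z)) (k (ι z)) := by
        simpa using hφ.dist_le_mul (k' (ι z)) (k (ι z))
    _ ≤ ε := hk (ι z)

theorem Tsel_lax_monoidal {X X' V V' : Type*} [MetricSpace V] [MetricSpace V']
    (G : (X → V) → Set X) (H : (X' → V') → Set X') (ε : ℝ) :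
    ∀ k, Tsel ε (Nash G H) k ⊆ Nash (Tsel ε G) (Tsel ε H) k := by
  rintro k p ⟨k', hk', hG, hH⟩
  exact ⟨mem_Tsel_comp G LipschitzWith.prod_fst (·, p.2) hk' hG,
    mem_Tsel_comp H LipschitzWith.prod_snd (p.1, ·) hk' hH⟩
end

section
/- Given X, X' with decidable equality, k : X × X' → V × V', points x ∈ X, x' ∈ X', and functions g : X → V, h : X' → V' with d(g, π₀∘k(−,x')) ≤ ε and d(h, π₁∘k(x,−)) ≤ ε (sup-metrics), there exists k' : X × X' → V × V' with d(k',k) ≤ ε (sup- and max-metric), π₀∘k'(−,x') = g, and π₁∘k'(x,−) = h. -/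
/-! Replace the first coordinate of `k` by `g` on the slice `z' = x'` and the second coordinate
by `h` on the slice `z = x`, keeping `k` elsewhere. Each coordinate moves by at most `ε`, and the
max metric on `V × V'` sees only the larger of the two moves. -/

theorem dist_ite_self_le {V : Type*} [PseudoMetricSpace V] {ε : ℝ} (hε : 0 ≤ ε)
    {p : Prop} [Decidable p] {a b : V} (hab : p → dist a b ≤ ε) :
    dist (if p then a else b) b ≤ ε := by
  split_ifs with hp
  · exact hab hp
  · rwa [dist_self]

theorem exists_glueing {X X' V V' : Type*} [MetricSpace V] [MetricSpace V']
    [DecidableEq X] [DecidableEq X']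
    (ε : ℝ) (k : X × X' → V × V') (x : X) (x' : X')
    (g : X → V) (h : X' → V')
    (hg : ∀ z : X, dist (g z) (k (z, x')).1 ≤ ε)
    (hh : ∀ z' : X', dist (h z') (k (x, z')).2 ≤ ε) :
    ∃ k' : X × X' → V × V',
      (∀ p : X × X', dist (k' p) (k p) ≤ ε) ∧
      (∀ z : X, (k' (z, x')).1 = g z) ∧
      (∀ z' : X', (k' (x, z')).2 = h z') := by
  have hε : 0 ≤ ε := dist_nonneg.trans (hg x)
  refine ⟨fun p => (if p.2 = x' then g p.1 else (k p).1, if p.1 = x then h p.2 else (k p).2),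
    fun ⟨z, z'⟩ => ?_, fun z => if_pos rfl, fun z' => if_pos rfl⟩
  rw [Prod.dist_eq]
  refine max_le (dist_ite_self_le hε ?_) (dist_ite_self_le hε ?_)
  · rintro rfl
    exact hg z
  · rintro rfl
    exact hh z'
end

section
/- For X, X' with decidable equality, T_ε(G) ⊗ T_ε(H) ⊆ T_ε(G ⊗ H), hence (combined with lax monoidality) T_ε(G ⊗ H) = T_ε(G) ⊗ T_ε(H). -/
section

variable {X X' V V' : Type*} [MetricSpace V] [MetricSpace V']

theorem Tsel_Nash_subset_Nash_Tsel (ε : ℝ) (G : (X → V) → Set X)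
    (H : (X' → V') → Set X') (k : X × X' → V × V') :
    Tsel ε (Nash G H) k ⊆ Nash (Tsel ε G) (Tsel ε H) k := by
  rintro ⟨x, x'⟩ ⟨k', hk', hx, hx'⟩
  refine ⟨⟨fun z => (k' (z, x')).1, fun z => ?_, hx⟩,
    ⟨fun z' => (k' (x, z')).2, fun z' => ?_, hx'⟩⟩
  · exact (le_max_left _ _).trans (hk' (z, x'))
  · exact (le_max_right _ _).trans (hk' (x, z'))

theorem Nash_Tsel_subset_Tsel_Nash (ε : ℝ) (G : (X → V) → Set X)
    (H : (X' → V') → Set X') (k : X × X' → V × V') :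
    Nash (Tsel ε G) (Tsel ε H) k ⊆ Tsel ε (Nash G H) k := by
  classical
  rintro ⟨x, x'⟩ ⟨⟨k₁, hk₁, hGx⟩, k₂, hk₂, hHx'⟩
  have hε : 0 ≤ ε := dist_nonneg.trans (hk₁ x)
  refine ⟨fun p => (if p.2 = x' then k₁ p.1 else (k p).1, if p.1 = x then k₂ p.2 else (k p).2),
    fun ⟨z, z'⟩ => max_le ?_ ?_, by simpa using hGx, by simpa using hHx'⟩
  · dsimp only
    split_ifs with h
    · exact h ▸ hk₁ z
    · simpa using hε
  · dsimp only
    split_ifs with h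
    · exact h ▸ hk₂ z'
    · simpa using hε

end

theorem Tsel_monoidal_general {X X' V V' : Type*} [MetricSpace V] [MetricSpace V']
    (G : (X → V) → Set X) (H : (X' → V') → Set X') (ε : ℝ) :
    (∀ k, Nash (Tsel ε G) (Tsel ε H) k ⊆ Tsel ε (Nash G H) k) ∧
    Tsel ε (Nash G H) = Nash (Tsel ε G) (Tsel ε H) :=
  ⟨Nash_Tsel_subset_Tsel_Nash ε G H, funext fun k =>
    (Tsel_Nash_subset_Nash_Tsel ε G H k).antisymm (Nash_Tsel_subset_Tsel_Nash ε G H k)⟩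

theorem Tsel_monoidal {X X' V V' : Type*} [MetricSpace V] [MetricSpace V']
    [DecidableEq X] [DecidableEq X']
    (G : (X → V) → Set X) (H : (X' → V') → Set X') (ε : ℝ) :
    (∀ k, Nash (Tsel ε G) (Tsel ε H) k ⊆ Tsel ε (Nash G H) k) ∧
    Tsel ε (Nash G H) = Nash (Tsel ε G) (Tsel ε H) :=
  Tsel_monoidal_general G H ε
end

section
/- Sequential composition preserves approximation laxly for open games: if x ∈ E_{T_ε(H∘G),(σ,τ)}(k), then x ∈ E_{T_ε(H)∘T_ε(G),(σ,τ)}(k), assuming all lenses in H are short. -/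
/-- Approximation of an equilibrium predicate at grade ε. -/
def TE {Sg X Y R : Type*} [MetricSpace R] (ε : ℝ)
    (E : Sg → X → (Y → R) → Prop) : Sg → X → (Y → R) → Prop :=
  fun σ x k => ∃ k' : Y → R, (∀ y, dist (k' y) (k y) ≤ ε) ∧ E σ x k'

theorem dist_lens_comp_le {Y Z R T : Type*} [MetricSpace R] [MetricSpace T]
    (Hp : Y → Z) (Hc : Y × T → R)
    (hshort : ∀ (y : Y) (t t' : T), dist (Hc (y, t)) (Hc (y, t')) ≤ dist t t')
    {ε : ℝ} {k k' : Z → T} (hk : ∀ z, dist (k' z) (k z) ≤ ε) (y : Y) :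
    dist (Hc (y, k' (Hp y))) (Hc (y, k (Hp y))) ≤ ε :=
  (hshort y _ _).trans (hk _)

theorem seq_comp_lax_general {Sg Ω X Y R Z T : Type*} [MetricSpace R] [MetricSpace T]
    -- the open game G : (X,S) → (Y,R)
    (Gp : Sg → X → Y)
    (EG : Sg → X → (Y → R) → Prop)
    -- the open game H : (Y,R) → (Z,T)
    (Hp : Ω → Y → Z) (Hc : Ω → Y × T → R)
    (EH : Ω → Y → (Z → T) → Prop)
    -- all lenses of H are short
    (hHshort : ∀ (τ : Ω) (y : Y) (t t' : T), dist (Hc τ (y, t)) (Hc τ (y, t')) ≤ dist t t')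
    (ε : ℝ) (σ : Sg) (τ : Ω) (x : X) (k : Z → T)
    -- x is an equilibrium of T_ε(H ∘ G): the composite equilibrium predicate of H ∘ G,
    -- approximated at grade ε
    (hx : TE ε (fun (p : Sg × Ω) x k =>
            EG p.1 x (fun y => Hc p.2 (y, k (Hp p.2 y))) ∧ EH p.2 (Gp p.1 x) k)
          (σ, τ) x k) :
    -- x is an equilibrium of T_ε(H) ∘ T_ε(G)
    TE ε EG σ x (fun y => Hc τ (y, k (Hp τ y))) ∧ TE ε EH τ (Gp σ x) k := by
  obtain ⟨k', hk', hEG, hEH⟩ := hx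
  -- The same witness k' serves H, and pulled back along the short lens H_τ it serves G.
  exact ⟨⟨fun y => Hc τ (y, k' (Hp τ y)), dist_lens_comp_le (Hp τ) (Hc τ) (hHshort τ) hk', hEG⟩,
    ⟨k', hk', hEH⟩⟩

theorem seq_comp_lax {Sg Ω X S Y R Z T : Type*} [MetricSpace R] [MetricSpace T]
    -- the open game G : (X,S) → (Y,R)
    (Gp : Sg → X → Y) (Gc : Sg → X × R → S)
    (EG : Sg → X → (Y → R) → Prop)
    -- the open game H : (Y,R) → (Z,T)
    (Hp : Ω → Y → Z) (Hc : Ω → Y × T → R)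
    (EH : Ω → Y → (Z → T) → Prop)
    -- all lenses of H are short
    (hHshort : ∀ (τ : Ω) (y : Y) (t t' : T), dist (Hc τ (y, t)) (Hc τ (y, t')) ≤ dist t t')
    (ε : ℝ) (σ : Sg) (τ : Ω) (x : X) (k : Z → T)
    -- x is an equilibrium of T_ε(H ∘ G): the composite equilibrium predicate of H ∘ G,
    -- approximated at grade ε
    (hx : TE ε (fun (p : Sg × Ω) x k =>
            EG p.1 x (fun y => Hc p.2 (y, k (Hp p.2 y))) ∧ EH p.2 (Gp p.1 x) k)
          (σ, τ) x k) :
    -- x is an equilibrium of T_ε(H) ∘ T_ε(G)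
    TE ε EG σ x (fun y => Hc τ (y, k (Hp τ y))) ∧ TE ε EH τ (Gp σ x) k :=
  seq_comp_lax_general Gp EG Hp Hc EH hHshort ε σ τ x k hx
end

section
/- Functoriality of approximation for open games: if (f, α, β) is a morphism of open games from G to G' with α, β short lens maps, then (f, α, β) is also a morphism from T_ε(G) to T_ε(G'). -/
theorem dist_lens_pullback_le {Y Y' R R' : Type*} [Dist R] [Dist R']
    {β₀ : Y → Y'} {β₁ : Y × R' → R}
    (hβshort : ∀ (y : Y) (r r' : R'), dist (β₁ (y, r)) (β₁ (y, r')) ≤ dist r r')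
    {k k' : Y' → R'} {ε : ℝ} (hk : ∀ y', dist (k' y') (k y') ≤ ε) (y : Y) :
    dist (β₁ (y, k' (β₀ y))) (β₁ (y, k (β₀ y))) ≤ ε :=
  (hβshort y _ _).trans (hk (β₀ y))

theorem open_game_functorial_general {Sg1 Sg2 X Y R X' Y' R' : Type*}
    [MetricSpace R] [MetricSpace R']
    (E : Sg1 → X → (Y → R) → Prop) (E' : Sg2 → X' → (Y' → R') → Prop)
    (f : Sg1 → Sg2)
    (α₀ : X → X')
    (β₀ : Y → Y') (β₁ : Y × R' → R)
    (hβshort : ∀ (y : Y) (r r' : R'), dist (β₁ (y, r)) (β₁ (y, r')) ≤ dist r r')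
    (hmor : ∀ (σ : Sg1) (x : X) (k : Y' → R'),
        E' (f σ) (α₀ x) k → E σ x (fun y => β₁ (y, k (β₀ y))))
    (ε : ℝ) :
    ∀ (σ : Sg1) (x : X) (k : Y' → R'),
      TE ε E' (f σ) (α₀ x) k → TE ε E σ x (fun y => β₁ (y, k (β₀ y))) := by
  rintro σ x k ⟨k', hk'k, hE'⟩
  exact ⟨fun y => β₁ (y, k' (β₀ y)), dist_lens_pullback_le hβshort hk'k, hmor σ x k' hE'⟩

theorem open_game_functorial {Sg1 Sg2 X S Y R X' S' Y' R' : Type*}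
    [MetricSpace R] [MetricSpace R']
    (E : Sg1 → X → (Y → R) → Prop) (E' : Sg2 → X' → (Y' → R') → Prop)
    (f : Sg1 → Sg2)
    (α₀ : X → X') (α₁ : X × S' → S)
    (β₀ : Y → Y') (β₁ : Y × R' → R)
    (hβshort : ∀ (y : Y) (r r' : R'), dist (β₁ (y, r)) (β₁ (y, r')) ≤ dist r r')
    (hmor : ∀ (σ : Sg1) (x : X) (k : Y' → R'),
        E' (f σ) (α₀ x) k → E σ x (fun y => β₁ (y, k (β₀ y))))
    (ε : ℝ) :
    ∀ (σ : Sg1) (x : X) (k : Y' → R'),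
      TE ε E' (f σ) (α₀ x) k → TE ε E σ x (fun y => β₁ (y, k (β₀ y))) :=
  open_game_functorial_general E E' f α₀ β₀ β₁ hβshort hmor ε
end

section
/- Distance between Nash products: if X, X' have decidable equality, d(s,s') ≤ ε and d(t,t') ≤ ε, then d(s ⊗ t, s' ⊗ t') ≤ ε. -/
open scoped ENNReal

def TselE {X V : Type*} [MetricSpace V] (ε : ℝ≥0∞) (s : (X → V) → Set X) :
    (X → V) → Set X :=
  fun k => {x | ∃ k' : X → V, (∀ y, edist (k' y) (k y) ≤ ε) ∧ x ∈ s k'}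

noncomputable def gdist {X V : Type*} [MetricSpace V]
    (s s' : (X → V) → Set X) : ℝ≥0∞ :=
  sInf {ε | (∀ k, s k ⊆ TselE ε s' k) ∧ (∀ k, s' k ⊆ TselE ε s k)}

/-!
Both players' deviations can be realised by one perturbation of the joint outcome function:
change the first component only on the row `X × {x'}` and the second only on the column
`{x} × X'`. Hence `Nash (T_δ s) (T_δ t) ⊆ T_δ (Nash s t)`, so `δ`-closeness of the factors
passes to the Nash products for every `δ > ε`, which gives `d ≤ ε` in the limit.
-/

section

variable {X X' V V' : Type*}

theorem TselE_mono [MetricSpace V] {a b : ℝ≥0∞} (hab : a ≤ b) (s : (X → V) → Set X)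
    (k : X → V) : TselE a s k ⊆ TselE b s k :=
  fun _ ⟨k', hk', hx⟩ => ⟨k', fun y => (hk' y).trans hab, hx⟩

theorem Nash_mono {s s' : (X → V) → Set X} {t t' : (X' → V') → Set X'}
    (hs : ∀ k, s k ⊆ s' k) (ht : ∀ k, t k ⊆ t' k) (f : X × X' → V × V') :
    Nash s t f ⊆ Nash s' t' f :=
  fun _ ⟨h₁, h₂⟩ => ⟨hs _ h₁, ht _ h₂⟩

theorem Nash_TselE_subset [MetricSpace V] [MetricSpace V'] (δ : ℝ≥0∞)
    (s : (X → V) → Set X) (t : (X' → V') → Set X') (f : X × X' → V × V') :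
    Nash (TselE δ s) (TselE δ t) f ⊆ TselE δ (Nash s t) f := by
  classical
  rintro ⟨x, x'⟩ ⟨⟨k, hk, hx⟩, ⟨k', hk', hx'⟩⟩
  refine ⟨fun q => (if q.2 = x' then k q.1 else (f q).1,
    if q.1 = x then k' q.2 else (f q).2), fun ⟨z, z'⟩ => ?_, by simpa using hx,
    by simpa using hx'⟩
  rw [Prod.edist_eq]
  dsimp only
  refine max_le ?_ ?_
  · split_ifs with h
    · subst h
      exact hk z
    · simp
  · split_ifs with h
    · subst h
      exact hk' z'
    · simp

theorem Nash_subset_TselE [MetricSpace V] [MetricSpace V'] {δ : ℝ≥0∞}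
    {s s' : (X → V) → Set X} {t t' : (X' → V') → Set X'}
    (hs : ∀ k, s k ⊆ TselE δ s' k) (ht : ∀ k, t k ⊆ TselE δ t' k) (f : X × X' → V × V') :
    Nash s t f ⊆ TselE δ (Nash s' t') f :=
  (Nash_mono hs ht f).trans (Nash_TselE_subset δ s' t' f)

theorem subset_TselE_of_gdist_lt [MetricSpace V] {s s' : (X → V) → Set X} {δ : ℝ≥0∞}
    (h : gdist s s' < δ) : (∀ k, s k ⊆ TselE δ s' k) ∧ (∀ k, s' k ⊆ TselE δ s k) := by
  obtain ⟨η, ⟨hs, hs'⟩, hηδ⟩ := sInf_lt_iff.mp h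
  exact ⟨fun k => (hs k).trans (TselE_mono hηδ.le s' k),
    fun k => (hs' k).trans (TselE_mono hηδ.le s k)⟩

end

theorem gdist_nash_general {X X' V V' : Type*} [MetricSpace V] [MetricSpace V']
    (s s' : (X → V) → Set X) (t t' : (X' → V') → Set X') (ε : ℝ≥0∞)
    (hs : gdist s s' ≤ ε) (ht : gdist t t' ≤ ε) :
    gdist (Nash s t) (Nash s' t') ≤ ε := by
  refine le_of_forall_gt_imp_ge_of_dense fun δ hδ => sInf_le ?_
  obtain ⟨hss', hs's⟩ := subset_TselE_of_gdist_lt (hs.trans_lt hδ)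
  obtain ⟨htt', ht't⟩ := subset_TselE_of_gdist_lt (ht.trans_lt hδ)
  exact ⟨Nash_subset_TselE hss' htt', Nash_subset_TselE hs's ht't⟩

theorem gdist_nash {X X' V V' : Type*} [MetricSpace V] [MetricSpace V']
    [DecidableEq X] [DecidableEq X']
    (s s' : (X → V) → Set X) (t t' : (X' → V') → Set X') (ε : ℝ≥0∞)
    (hs : gdist s s' ≤ ε) (ht : gdist t t' ≤ ε) :
    gdist (Nash s t) (Nash s' t') ≤ ε :=
  gdist_nash_general s s' t t' ε hs ht
end
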